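/- (Type D inversion symmetry, one-variable version) For every partition μ and integers n ≥ μ₁, (xy)^n Σ_{λ: λ₁≤n, λ even} [1/(q;q)_{n−λ₁}] Q_{λ/μ}(x^{−1},y^{−1};q,0) = Σ_{λ: λ₁≤n, λ even} [1/(q;q)_{n−λ₁}] Q_{λ/μ}(x,y;q,0), as an identity of Laurent polynomials in x,y over ℚ(q). Equivalently (after reduction via the a=0 evaluation), (xy)^n Σ_{λ: λ₁≤n} [x^{−odd(λ')} y^{−|λ/μ|}/(q;q)_{n−λ₁}] c_{λ/μ}(q) = Σ_{λ: λ₁≤n} [x^{odd(λ')} y^{|λ/μ|}/(q;q)_{n−λ₁}] c_{λ/μ}(q), where c_{λ/μ}(q) = Π_i (q;q)_{μ_i−μ_{i+1}}/((q;q)_{λ_i−μ_i}(q;q)_{μ_i−λ_{i+1}}) (with μ₀ := n), and the sum is over λ interlacing with μ (μ_{i} ≤ λ_i ≤ μ_{i−1}). -/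

import Mathlib

open Finset
open scoped Classical

noncomputable section

variable {K : Type*} [Field K]

/-- `qPochQ q m = (q;q)_m = ∏_{i=1}^m (1 - q^i)`. -/
def qPochQ (q : K) (m : ℕ) : K := ∏ i ∈ Finset.range m, (1 - q ^ (i + 1))

/-- Partitions bounded in length and part size, encoded by tuples. -/
def lamOf {m c : ℕ} (g : Fin m → Fin c) : ℕ → ℕ := fun i => if h : i < m then (g ⟨i, h⟩ : ℕ) else 0

/-- `odd(λ')`: the number of odd columns of `λ`. -/
def oddCols (R : ℕ) (f : ℕ → ℕ) : ℕ := ∑ k ∈ Finset.range R, (f (2 * k) - f (2 * k + 1))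

/-!
The complementation `λ_i ↦ μ_i + (μ_{i-1} - λ_i)` is an involution of the set of `λ` interlacing
`μ`; it exchanges `λ_i - μ_i` with `μ_{i-1} - λ_i`. Both `|λ/μ|` and `odd(λ')` are telescoping sums
of these differences, so it sends them to `n - |λ/μ|` and `n - odd(λ')`, while the weight
`c_{λ/μ}(q) / (q;q)_{n-λ₁}` is a fixed numerator over `∏_i (q;q)_{λ_i-μ_i} (q;q)_{μ_{i-1}-λ_i}`,
which is invariant. Reindexing the left-hand sum by the complementation gives the right-hand one.
-/

theorem qPochQ_zero (q : K) : qPochQ q 0 = 1 := prod_range_zero _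

theorem Finset.sum_range_tsub_of_antitone {v : ℕ → ℕ} (hv : Antitone v) (n : ℕ) :
    ∑ i ∈ range n, (v i - v (i + 1)) = v 0 - v n := by
  induction n with
  | zero => simp
  | succ n ih =>
    rw [sum_range_succ, ih]
    have := hv (Nat.zero_le n)
    have := hv (Nat.le_add_right n 1)
    omega

/-- Applied with `ν i = μ_{i-1}` (and `ν 0 = n`), this is `f` interlacing `μ`. -/
def InBox (μ ν f : ℕ → ℕ) : Prop := ∀ i, μ i ≤ f i ∧ f i ≤ ν i

def boxCompl (μ ν f : ℕ → ℕ) : ℕ → ℕ := fun i => μ i + (ν i - f i)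

namespace InBox

variable {μ ν f : ℕ → ℕ}

theorem inBox_boxCompl (hf : InBox μ ν f) : InBox μ ν (boxCompl μ ν f) := fun i => by
  have := hf i
  simp only [_root_.boxCompl]
  omega

theorem boxCompl_boxCompl (hf : InBox μ ν f) : boxCompl μ ν (boxCompl μ ν f) = f := by
  funext i
  have := hf i
  simp only [_root_.boxCompl]
  omega

theorem sub_boxCompl (hf : InBox μ ν f) (i : ℕ) : ν i - boxCompl μ ν f i = f i - μ i := by
  have := hf i
  simp only [_root_.boxCompl]
  omega

theorem antitone (hf : InBox μ ν f) (hν : ∀ i, ν (i + 1) = μ i) : Antitone ν :=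
  antitone_nat_of_succ_le fun i => hν i ▸ ((hf i).1.trans (hf i).2)

theorem sum_boxCompl_sub_add (hf : InBox μ ν f) (hν : ∀ i, ν (i + 1) = μ i) (R : ℕ) :
    ∑ i ∈ range R, (boxCompl μ ν f i - μ i) + ∑ i ∈ range R, (f i - μ i) = ν 0 - ν R := by
  rw [← sum_add_distrib, ← sum_range_tsub_of_antitone (hf.antitone hν)]
  refine sum_congr rfl fun i _ => ?_
  have := hf i
  simp only [_root_.boxCompl, hν]
  omega

theorem oddCols_boxCompl_add (hf : InBox μ ν f) (hν : ∀ i, ν (i + 1) = μ i) (R : ℕ) :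
    oddCols R (boxCompl μ ν f) + oddCols R f = ν 0 - ν (2 * R) := by
  have hv : Antitone fun k => ν (2 * k) := (hf.antitone hν).comp_monotone fun _ _ h => by omega
  rw [oddCols, oddCols, ← sum_add_distrib, ← Nat.mul_zero 2, ← sum_range_tsub_of_antitone hv]
  refine sum_congr rfl fun k _ => ?_
  have := hf (2 * k)
  have := hf (2 * k + 1)
  have := hν (2 * k)
  simp only [_root_.boxCompl, Nat.mul_succ, hν]
  omega

theorem prod_boxCompl {M : Type*} [CommMonoid M] (hf : InBox μ ν f) (P : ℕ → M) (R : ℕ) :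
    ∏ i ∈ range R, (P (boxCompl μ ν f i - μ i) * P (ν i - boxCompl μ ν f i))
      = ∏ i ∈ range R, (P (f i - μ i) * P (ν i - f i)) := by
  refine prod_congr rfl fun i _ => ?_
  rw [hf.sub_boxCompl, mul_comm]
  simp only [_root_.boxCompl, Nat.add_sub_cancel_left]

end InBox

theorem prod_div_div_eq_div_prod {μ ν f : ℕ → ℕ} (hν : ∀ i, ν (i + 1) = μ i) (P N : ℕ → K)
    (hP : P 0 = 1) (R : ℕ) (hf : f R = 0) :
    (∏ i ∈ range R, N i / (P (f i - μ i) * P (μ i - f (i + 1)))) / P (ν 0 - f 0)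
      = (∏ i ∈ range R, N i) / ∏ i ∈ range (R + 1), (P (f i - μ i) * P (ν i - f i)) := by
  rw [prod_div_distrib, div_div, prod_mul_distrib, prod_mul_distrib, prod_range_succ,
    prod_range_succ' (fun i => P (ν i - f i)), hf, Nat.zero_sub, hP, mul_one]
  simp only [hν, mul_assoc]

def toTuple (m n : ℕ) (f : ℕ → ℕ) : Fin m → Fin (n + 1) :=
  fun i => ⟨min n (f i), Nat.lt_succ_of_le (min_le_left _ _)⟩

theorem toTuple_lamOf {m n : ℕ} (g : Fin m → Fin (n + 1)) : toTuple m n (lamOf g) = g := by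
  funext i
  ext
  simp [toTuple, lamOf, Nat.le_of_lt_succ (g i).isLt]

theorem lamOf_toTuple {m n : ℕ} {f : ℕ → ℕ} (hn : ∀ i, f i ≤ n) (hm : ∀ i, m ≤ i → f i = 0) :
    lamOf (toTuple m n f) = f := by
  funext i
  by_cases hi : i < m
  · simp [lamOf, toTuple, hi, hn i]
  · simp [lamOf, hi, hm i (not_lt.mp hi)]

theorem lamOf_of_le {m c : ℕ} (g : Fin m → Fin c) {i : ℕ} (hi : m ≤ i) : lamOf g i = 0 :=
  dif_neg (not_lt.mpr hi)

theorem InBox.lamOf_toTuple_boxCompl {μ ν : ℕ → ℕ} {n L : ℕ} {g : Fin (L + 1) → Fin (n + 1)}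
    (hg : InBox μ ν (lamOf g)) (hν : ∀ i, ν (i + 1) = μ i) (hν0 : ν 0 = n)
    (hμ : ∀ i, L ≤ i → μ i = 0) :
    lamOf (toTuple (L + 1) n (boxCompl μ ν (lamOf g))) = boxCompl μ ν (lamOf g) := by
  refine lamOf_toTuple (fun i => hν0 ▸ (hg.inBox_boxCompl i).2.trans (hg.antitone hν i.zero_le))
    fun i hi => ?_
  obtain ⟨j, rfl⟩ : ∃ j, i = j + 1 := ⟨i - 1, by omega⟩
  simp [boxCompl, lamOf_of_le g hi, hν, hμ j (by omega), hμ (j + 1) (by omega)]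

theorem sum_ite_inBox_boxCompl {M : Type*} [AddCommMonoid M] {μ ν : ℕ → ℕ} {n L : ℕ}
    (hν : ∀ i, ν (i + 1) = μ i) (hν0 : ν 0 = n) (hμ : ∀ i, L ≤ i → μ i = 0)
    (F : (ℕ → ℕ) → M) :
    ∑ g : Fin (L + 1) → Fin (n + 1),
        (if InBox μ ν (lamOf g) then F (boxCompl μ ν (lamOf g)) else 0)
      = ∑ g : Fin (L + 1) → Fin (n + 1), if InBox μ ν (lamOf g) then F (lamOf g) else 0 := by
  let G (g : Fin (L + 1) → Fin (n + 1)) := toTuple (L + 1) n (boxCompl μ ν (lamOf g))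
  have hG {g} (hg : InBox μ ν (lamOf g)) : lamOf (G g) = boxCompl μ ν (lamOf g) :=
    hg.lamOf_toTuple_boxCompl hν hν0 hμ
  have mem {g : Fin (L + 1) → Fin (n + 1)} :
      g ∈ univ.filter (fun g => InBox μ ν (lamOf g)) ↔ InBox μ ν (lamOf g) := by
    simp
  have maps {g} (hg : InBox μ ν (lamOf g)) : InBox μ ν (lamOf (G g)) :=
    hG hg ▸ hg.inBox_boxCompl
  have invol {g} (hg : InBox μ ν (lamOf g)) : G (G g) = g := by
    change toTuple _ _ _ = g
    rw [hG hg, hg.boxCompl_boxCompl, toTuple_lamOf]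
  rw [← sum_filter, ← sum_filter]
  exact sum_nbij' G G (fun _ hg => mem.2 (maps (mem.1 hg))) (fun _ hg => mem.2 (maps (mem.1 hg)))
    (fun _ hg => invol (mem.1 hg)) (fun _ hg => invol (mem.1 hg))
    (fun _ hg => by rw [hG (mem.1 hg)])

/-- With `P = (q;q)_•` and `N i = (q;q)_{μ_i-μ_{i+1}}` this is the summand
`x^{odd(λ')} y^{|λ/μ|} c_{λ/μ}(q) / (q;q)_{n-λ₁}` of the theorem, for `λ = f`. -/
def interlacingTerm (P N : ℕ → K) (x y : K) (n R : ℕ) (μ f : ℕ → ℕ) : K :=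
  x ^ oddCols R f * y ^ (∑ i ∈ range R, (f i - μ i)) / P (n - f 0)
    * ∏ i ∈ range R, N i / (P (f i - μ i) * P (μ i - f (i + 1)))

theorem InBox.mul_interlacingTerm_inv {μ ν f : ℕ → ℕ} {n L : ℕ} (hf : InBox μ ν f)
    (hν : ∀ i, ν (i + 1) = μ i) (hν0 : ν 0 = n) (hμ : ∀ i, L ≤ i → μ i = 0)
    (hfL : f (L + 1) = 0) (P N : ℕ → K) (hP : P 0 = 1) {x y : K} (hx : x ≠ 0) (hy : y ≠ 0) :
    (x * y) ^ n * interlacingTerm P N x⁻¹ y⁻¹ n (L + 1) μ f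
      = interlacingTerm P N x y n (L + 1) μ (boxCompl μ ν f) := by
  have cancel (z : K) (hz : z ≠ 0) (a b : ℕ) (h : a + b = n) : z ^ n * z⁻¹ ^ b = z ^ a := by
    rw [← h, pow_add, inv_pow, mul_inv_cancel_right₀ (pow_ne_zero b hz)]
  have hodd : oddCols (L + 1) (boxCompl μ ν f) + oddCols (L + 1) f = n := by
    rw [hf.oddCols_boxCompl_add hν, show 2 * (L + 1) = 2 * L + 1 + 1 by ring, hν,
      hμ _ (by omega), hν0, Nat.sub_zero]
  have hskew : ∑ i ∈ range (L + 1), (boxCompl μ ν f i - μ i)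
      + ∑ i ∈ range (L + 1), (f i - μ i) = n := by
    rw [hf.sum_boxCompl_sub_add hν, hν, hμ L le_rfl, hν0, Nat.sub_zero]
  have hcompl : boxCompl μ ν f (L + 1) = 0 := by
    simp [boxCompl, hfL, hν, hμ L le_rfl, hμ (L + 1) (by omega)]
  have hweight : (∏ i ∈ range (L + 1), N i / (P (boxCompl μ ν f i - μ i)
        * P (μ i - boxCompl μ ν f (i + 1)))) / P (n - boxCompl μ ν f 0)
      = (∏ i ∈ range (L + 1), N i / (P (f i - μ i) * P (μ i - f (i + 1)))) / P (n - f 0) := by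
    rw [← hν0, prod_div_div_eq_div_prod hν P N hP _ hcompl,
      prod_div_div_eq_div_prod hν P N hP _ hfL, hf.prod_boxCompl]
  rw [interlacingTerm, interlacingTerm, ← cancel x hx _ _ hodd, ← cancel y hy _ _ hskew]
  linear_combination (x ^ n * x⁻¹ ^ oddCols (L + 1) f
    * (y ^ n * y⁻¹ ^ ∑ i ∈ range (L + 1), (f i - μ i))) * hweight.symm

theorem typeD_inversion_symmetry (q x y : K)
    (hx : x ≠ 0) (hy : y ≠ 0)
    (n L : ℕ) (μ : ℕ → ℕ) (hμ0 : ∀ i, L ≤ i → μ i = 0) :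
    let μprev : ℕ → ℕ := fun i => match i with | 0 => n | j + 1 => μ j
    let interlace : (ℕ → ℕ) → Prop := fun f => ∀ i, μ i ≤ f i ∧ f i ≤ μprev i
    let cLM : (ℕ → ℕ) → K := fun f =>
      ∏ i ∈ Finset.range (L + 1),
        qPochQ q (μ i - μ (i + 1)) / (qPochQ q (f i - μ i) * qPochQ q (μ i - f (i + 1)))
    (x * y) ^ n *
      (∑ g : Fin (L + 1) → Fin (n + 1),
        if interlace (lamOf g) then
          x⁻¹ ^ oddCols (L + 1) (lamOf g)
            * y⁻¹ ^ (∑ i ∈ Finset.range (L + 1), (lamOf g i - μ i))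
            / qPochQ q (n - lamOf g 0) * cLM (lamOf g)
        else 0)
      = ∑ g : Fin (L + 1) → Fin (n + 1),
          if interlace (lamOf g) then
            x ^ oddCols (L + 1) (lamOf g)
              * y ^ (∑ i ∈ Finset.range (L + 1), (lamOf g i - μ i))
              / qPochQ q (n - lamOf g 0) * cLM (lamOf g)
          else 0 := by
  intro ν _ _
  have hν : ∀ i, ν (i + 1) = μ i := fun _ => rfl
  let N i := qPochQ q (μ i - μ (i + 1))
  show (x * y) ^ n * ∑ g : Fin (L + 1) → Fin (n + 1), (if InBox μ ν (lamOf g) then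
        interlacingTerm (qPochQ q) N x⁻¹ y⁻¹ n (L + 1) μ (lamOf g) else 0)
      = ∑ g : Fin (L + 1) → Fin (n + 1), if InBox μ ν (lamOf g) then
        interlacingTerm (qPochQ q) N x y n (L + 1) μ (lamOf g) else 0
  rw [mul_sum, ← sum_ite_inBox_boxCompl hν rfl hμ0]
  refine sum_congr rfl fun g _ => ?_
  split_ifs with hg
  · exact hg.mul_interlacingTerm_inv hν rfl hμ0 (lamOf_of_le g le_rfl) _ N (qPochQ_zero q) hx hy
  · exact mul_zero _
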